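/- arXiv:2408.02510 — 4 statements merged into one kernel-verified Lean document; each statement's English description precedes it below -/
import Mathlib

section
/- Let A be a C*-algebra and H a group acting on A by *-algebra automorphisms β_h. Then the following are equivalent: (i) for every pair of nonzero H-invariant hereditary closed *-subalgebras B₁, B₂ of A there exist b₁ ∈ B₁ and b₂ ∈ B₂ with b₁ b₂ ≠ 0; (ii) for every pair of nonzero elements x, y ∈ A there exists h ∈ H such that x β_h(y) ≠ 0. -/
/-!
If `x * β h y = 0` for every `h`, let `D` be the *-annihilator of the orbit of `y` (the `a` with
`a * s = star a * s = 0` on it) and `C` the *-annihilator of `D`. Then `star x * x ∈ D`,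
`y * star y ∈ C` and `C * D = 0`, while both are closed, `H`-invariant and hereditary. Heredity
is the C*-identity at work: from `0 ≤ x ≤ b` and `b * c = 0` we get `star c * x * c = 0`, i.e.
`‖CFC.sqrt x * c‖² = 0`, hence `x * c = 0`.
-/

theorem CStarAlgebra.mul_eq_zero_of_nonneg_of_le {A : Type*} [NonUnitalCStarAlgebra A]
    [PartialOrder A] [StarOrderedRing A] {x b c : A} (hx : 0 ≤ x)
    (hxb : x ≤ b) (hbc : b * c = 0) : x * c = 0 := by
  have hconj : star c * x * c = 0 := by
    refine le_antisymm ?_ (star_left_conjugate_nonneg hx c)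
    calc star c * x * c ≤ star c * b * c := star_left_conjugate_le_conjugate hxb c
      _ = 0 := by rw [mul_assoc, hbc, mul_zero]
  have hsqrt : CFC.sqrt x * c = 0 := by
    rw [← CStarRing.star_mul_self_eq_zero_iff, star_mul, (CFC.sqrt_nonneg x).isSelfAdjoint.star_eq,
      mul_assoc, ← mul_assoc (CFC.sqrt x), CFC.sqrt_mul_sqrt_self x hx, ← mul_assoc, hconj]
  rw [← CFC.sqrt_mul_sqrt_self x hx, mul_assoc, hsqrt, mul_zero]

namespace NonUnitalStarSubalgebra

section

variable {R A : Type*} [CommSemiring R] [StarRing R] [NonUnitalSemiring A] [StarRing A]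
  [Module R A] [StarModule R A] [IsScalarTower R A A]

def starAnnihilator (S : Set A) : NonUnitalStarSubalgebra R A where
  carrier := {a | ∀ s ∈ S, a * s = 0 ∧ star a * s = 0}
  add_mem' ha hb s hs := by simp [add_mul, star_add, ha s hs, hb s hs]
  zero_mem' s _ := by simp
  mul_mem' ha hb s hs := by simp [mul_assoc, star_mul, ha s hs, hb s hs]
  smul_mem' c a ha s hs := by simp [star_smul, smul_mul_assoc, ha s hs]
  star_mem' ha s hs := by simpa [and_comm] using ha s hs

theorem ne_bot_iff [SMulCommClass R A A] {B : NonUnitalStarSubalgebra R A} :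
    B ≠ ⊥ ↔ ∃ a ∈ B, a ≠ 0 := by
  simp only [ne_eq, eq_bot_iff, SetLike.le_def, NonUnitalStarAlgebra.mem_bot, not_forall,
    exists_prop]

variable {S : Set A} {a : A}

theorem mem_starAnnihilator :
    a ∈ starAnnihilator (R := R) S ↔ ∀ s ∈ S, a * s = 0 ∧ star a * s = 0 :=
  Iff.rfl

theorem image_starAnnihilator (e : A ≃+* A) (he : ∀ a, e (star a) = star (e a)) (S : Set A) :
    e '' (starAnnihilator (R := R) S : Set A) = starAnnihilator (R := R) (e '' S) := by
  ext a
  rw [e.image_eq_preimage_symm, Set.mem_preimage, SetLike.mem_coe, SetLike.mem_coe,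
    mem_starAnnihilator, mem_starAnnihilator, Set.forall_mem_image]
  refine forall₂_congr fun s _ => ?_
  rw [← e.apply_symm_apply a, ← he, ← map_mul, ← map_mul, e.symm_apply_apply,
    map_eq_zero_iff e e.injective, map_eq_zero_iff e e.injective]

theorem image_starAnnihilator_of_image_eq (e : A ≃+* A) (he : ∀ a, e (star a) = star (e a))
    (hS : e '' S = S) : e '' (starAnnihilator (R := R) S : Set A) = starAnnihilator (R := R) S := by
  rw [image_starAnnihilator e he, hS]

theorem isClosed_starAnnihilator [TopologicalSpace A] [T2Space A] [ContinuousMul A]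
    [ContinuousStar A] (S : Set A) :
    IsClosed (starAnnihilator (R := R) S : Set A) := by
  change IsClosed {a : A | ∀ s ∈ S, a * s = 0 ∧ star a * s = 0}
  simp only [Set.ofPred_forall, Set.ofPred_and]
  refine isClosed_iInter fun s => isClosed_iInter fun _ => .inter ?_ ?_
  · exact isClosed_eq (continuous_mul_const s) continuous_const
  · exact isClosed_eq ((continuous_mul_const s).comp continuous_star) continuous_const

end

theorem mem_starAnnihilator_of_nonneg_of_le {A : Type*} [NonUnitalCStarAlgebra A]
    [PartialOrder A] [StarOrderedRing A] {S : Set A} {x b : A}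
    (hb : b ∈ starAnnihilator (R := ℂ) S) (hx : 0 ≤ x) (hxb : x ≤ b) :
    x ∈ starAnnihilator (R := ℂ) S := fun s hs =>
  have hxs := CStarAlgebra.mul_eq_zero_of_nonneg_of_le hx hxb (hb s hs).1
  ⟨hxs, by rwa [hx.isSelfAdjoint.star_eq]⟩

end NonUnitalStarSubalgebra

theorem RingAut.image_range_apply {H A : Type*} [Group H] [Mul A] [Add A] (β : H →* RingAut A)
    (g : H) (a : A) : β g '' Set.range (fun h => β h a) = Set.range (fun h => β h a) := by
  rw [← Set.range_comp, ← (Equiv.mulLeft g).surjective.range_comp (fun h => β h a)]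
  congr 1
  ext h
  simp [map_mul]

open NonUnitalStarSubalgebra

theorem topologically_transitive_iff_general
    (A : Type*) [NonUnitalCStarAlgebra A] [PartialOrder A] [StarOrderedRing A]
    (H : Type*) [Group H]
    (β : H →* RingAut A)
    (hstar : ∀ (h : H) (a : A), β h (star a) = star (β h a)) :
    (∀ B₁ B₂ : NonUnitalStarSubalgebra ℂ A,
        IsClosed (B₁ : Set A) → IsClosed (B₂ : Set A) →
        (∀ b ∈ B₁, ∀ x : A, 0 ≤ x → x ≤ b → x ∈ B₁) →
        (∀ b ∈ B₂, ∀ x : A, 0 ≤ x → x ≤ b → x ∈ B₂) →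
        (∀ h : H, (β h) '' (B₁ : Set A) = (B₁ : Set A)) →
        (∀ h : H, (β h) '' (B₂ : Set A) = (B₂ : Set A)) →
        B₁ ≠ ⊥ → B₂ ≠ ⊥ →
        ∃ b₁ ∈ B₁, ∃ b₂ ∈ B₂, b₁ * b₂ ≠ 0)
    ↔ (∀ x y : A, x ≠ 0 → y ≠ 0 → ∃ h : H, x * β h y ≠ 0) := by
  constructor
  · intro htop x y hx hy
    by_contra! hxy
    set D := starAnnihilator (R := ℂ) (Set.range fun h => β h y)
    set C := starAnnihilator (R := ℂ) (D : Set A)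
    have hD_inv (h : H) : β h '' (D : Set A) = D :=
      image_starAnnihilator_of_image_eq (β h) (hstar h) (RingAut.image_range_apply β h y)
    have hC_inv (h : H) : β h '' (C : Set A) = C :=
      image_starAnnihilator_of_image_eq (β h) (hstar h) (hD_inv h)
    have hxD : star x * x ∈ D := by
      rintro _ ⟨h, rfl⟩
      simp [star_mul, mul_assoc, hxy h]
    have hyC : y * star y ∈ C := by
      intro d hd
      have hyd : star y * d = 0 := by simpa using congrArg star (hd y ⟨1, by simp⟩).2
      simp [star_mul, mul_assoc, hyd]
    obtain ⟨c, hc, d, hd, hcd⟩ := htop C D (isClosed_starAnnihilator _)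
      (isClosed_starAnnihilator _) (fun _ hb _ => mem_starAnnihilator_of_nonneg_of_le hb)
      (fun _ hb _ => mem_starAnnihilator_of_nonneg_of_le hb) hC_inv hD_inv
      (ne_bot_iff.2 ⟨_, hyC, (CStarRing.mul_star_self_ne_zero_iff y).2 hy⟩)
      (ne_bot_iff.2 ⟨_, hxD, (CStarRing.star_mul_self_ne_zero_iff x).2 hx⟩)
    exact hcd (hc d hd).1
  · intro hxy B₁ B₂ _ _ _ _ _ hB₂_inv hB₁ hB₂
    obtain ⟨b₁, hb₁, hb₁0⟩ := ne_bot_iff.1 hB₁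
    obtain ⟨b₂, hb₂, hb₂0⟩ := ne_bot_iff.1 hB₂
    obtain ⟨h, hh⟩ := hxy b₁ b₂ hb₁0 hb₂0
    exact ⟨b₁, hb₁, β h b₂, (hB₂_inv h).subset (Set.mem_image_of_mem _ hb₂), hh⟩

/-- For a group `H` acting on a C*-algebra `A` by *-algebra automorphisms,
topological transitivity (every pair of nonzero `H`-invariant hereditary closed
*-subalgebras has nonzero product) is equivalent to: for every pair of nonzero
`x, y ∈ A` there is `h ∈ H` with `x·β_h(y) ≠ 0`. -/
theorem topologically_transitive_iff
    (A : Type*) [NonUnitalCStarAlgebra A] [PartialOrder A] [StarOrderedRing A]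
    (H : Type*) [Group H]
    (β : H →* RingAut A)
    (hstar : ∀ (h : H) (a : A), β h (star a) = star (β h a))
    (hsmul : ∀ (h : H) (c : ℂ) (a : A), β h (c • a) = c • β h a) :
    (∀ B₁ B₂ : NonUnitalStarSubalgebra ℂ A,
        IsClosed (B₁ : Set A) → IsClosed (B₂ : Set A) →
        (∀ b ∈ B₁, ∀ x : A, 0 ≤ x → x ≤ b → x ∈ B₁) →
        (∀ b ∈ B₂, ∀ x : A, 0 ≤ x → x ≤ b → x ∈ B₂) →
        (∀ h : H, (β h) '' (B₁ : Set A) = (B₁ : Set A)) →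
        (∀ h : H, (β h) '' (B₂ : Set A) = (B₂ : Set A)) →
        B₁ ≠ ⊥ → B₂ ≠ ⊥ →
        ∃ b₁ ∈ B₁, ∃ b₂ ∈ B₂, b₁ * b₂ ≠ 0)
    ↔ (∀ x y : A, x ≠ 0 → y ≠ 0 → ∃ h : H, x * β h y ≠ 0) :=
  topologically_transitive_iff_general A H β hstar
end

section
/- Let A be a unital prime C*-algebra, G a finite abelian group, and α a faithful action of G on A by *-algebra automorphisms. Suppose that the fixed point algebra A^α is prime and that every *-algebra automorphism β of A satisfying β(a) = a for all a ∈ A^α equals α_g for some g ∈ G. Then every element z ∈ A that commutes with all elements of A^α is a scalar multiple of the identity; that is, (A^α)' ∩ A = ℂ·1. -/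
/-!
For self-adjoint `h` commuting with `A^α`, the unitaries `u_t = exp (i t h)` commute with `A^α`,
so by duality every `Ad u_t` is some `α_g`. Thus `t ↦ Ad u_t` is a homomorphism from the divisible
group `ℝ` into the finite group `α(G)`, hence trivial: every `u_t` is central, and differentiating
at `t = 0` shows that `h` is central. Since `A^α` is `*`-closed, the real and imaginary parts of `z`
commute with `A^α`, so `z` is central. Finally, the spectrum of a central element of a prime
C*-algebra is a single point: bump functions around two distinct points of it would give two
nonzero central elements with zero product.
-/

open Complex ComplexStarModule

theorem Commute.of_forall_exp_smul_left {𝕂 𝔸 : Type*} [RCLike 𝕂] [NormedRing 𝔸]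
    [NormedAlgebra 𝕂 𝔸] [CompleteSpace 𝔸] {x a : 𝔸}
    (h : ∀ t : 𝕂, Commute (NormedSpace.exp (t • x)) a) : Commute x a := by
  have hl := (hasDerivAt_exp_smul_const x (0 : 𝕂)).mul_const a
  have hr := (hasDerivAt_exp_smul_const x (0 : 𝕂)).const_mul a
  rw [funext fun t : 𝕂 => (h t).eq] at hl
  simpa [Commute, SemiconjBy] using hl.unique hr

theorem MonoidHom.eq_one_of_finite {D G : Type*} [AddGroup D] [DivisibleBy D ℤ] [Group G]
    [Finite G] (f : Multiplicative D →* G) : f = 1 := by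
  refine MonoidHom.ext fun d => ?_
  have hn : (Nat.card G : ℤ) ≠ 0 := Nat.cast_ne_zero.mpr Nat.card_pos.ne'
  obtain ⟨d, rfl⟩ := Multiplicative.ofAdd.surjective d
  rw [← DivisibleBy.div_cancel d hn, ofAdd_zsmul, map_zpow, zpow_natCast, pow_card_eq_one']
  rfl

theorem MonoidHom.eq_one_of_finite_range {D G : Type*} [AddGroup D] [DivisibleBy D ℤ] [Group G]
    (f : Multiplicative D →* G) (hf : (Set.range f).Finite) : f = 1 := by
  have : Finite f.range := by rw [← SetLike.coe_sort_coe, coe_range]; exact hf.to_subtype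
  rw [← f.subtype_comp_rangeRestrict, f.rangeRestrict.eq_one_of_finite, comp_one]

def StarAlgEquiv.toAlgEquivHom {R A : Type*} [CommSemiring R] [Semiring A] [Algebra R A]
    [Star A] :
    (A ≃⋆ₐ[R] A) →* (A ≃ₐ[R] A) where
  toFun := StarAlgEquiv.toAlgEquiv
  map_one' := rfl
  map_mul' _ _ := rfl

section
variable {A : Type*} [NormedRing A] [NormedAlgebra ℂ A] [StarRing A] [ContinuousStar A]
  [CompleteSpace A] [StarModule ℂ A]

noncomputable def selfAdjoint.expUnitaryHom (h : selfAdjoint A) :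
    Multiplicative ℝ →* unitary A where
  toFun t := selfAdjoint.expUnitary (t.toAdd • h)
  map_one' := by simp
  map_mul' s t := by
    simp only [toAdd_mul, add_smul]
    exact Commute.expUnitary_add (((Commute.refl (h : A)).smul_left _).smul_right _)

theorem selfAdjoint.commute_expUnitaryHom {h : selfAdjoint A} {a : A} (hc : Commute (h : A) a)
    (t : Multiplicative ℝ) : Commute (selfAdjoint.expUnitaryHom h t : A) a := by
  simp only [selfAdjoint.expUnitaryHom, MonoidHom.coe_mk, OneHom.coe_mk,
    selfAdjoint.expUnitary_coe, selfAdjoint.val_smul]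
  exact ((hc.smul_left _).smul_left _).exp_left

theorem IsSelfAdjoint.commute_of_forall_commute_fixed {G : Type*} [Monoid G] [Finite G]
    (α : G →* (A ≃ₐ[ℂ] A))
    (hduality : ∀ β : A ≃ₐ[ℂ] A, (∀ a : A, β (star a) = star (β a)) →
        (∀ a : A, (∀ g : G, α g a = a) → β a = a) → ∃ g : G, β = α g)
    {h : A} (hh : IsSelfAdjoint h) (hfix : ∀ a : A, (∀ g : G, α g a = a) → Commute h a)
    (b : A) : Commute h b := by
  let U := selfAdjoint.expUnitaryHom (⟨h, hh⟩ : selfAdjoint A)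
  let ψ := StarAlgEquiv.toAlgEquivHom.comp ((Unitary.conjStarAlgAut ℂ A).comp U)
  have hψ_range : ∀ t, ψ t ∈ Set.range α := fun t =>
    (hduality (ψ t) (fun a => map_star (Unitary.conjStarAlgAut ℂ A (U t)) a) fun a ha =>
      (commute_unitary_iff_star_right_conjugate (U t).2).1 <|
        selfAdjoint.commute_expUnitaryHom (hfix a ha) t).imp fun _ hg => hg.symm
  have hψ : ψ = 1 :=
    ψ.eq_one_of_finite_range ((Set.finite_range α).subset (Set.range_subset_iff.2 hψ_range))
  have hU : ∀ t, Commute (U t : A) b := fun t =>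
    (commute_unitary_iff_star_right_conjugate (U t).2).2 (AlgEquiv.ext_iff.1 congr($hψ t) b)
  refine (Commute.smul_left_iff₀ I_ne_zero).1 <|
    Commute.of_forall_exp_smul_left (𝕂 := ℝ) fun t => ?_
  simpa [U, selfAdjoint.expUnitaryHom, smul_comm (t : ℝ) I] using hU (.ofAdd t)

end

section
variable {A : Type*} [Ring A] [StarRing A] [Algebra ℂ A] [StarModule ℂ A] {a b : A}

theorem Commute.realPart_left (h : Commute a b) (h' : Commute (star a) b) :
    Commute (ℜ a : A) b := by
  rw [realPart_apply_coe]
  exact (h.add_left h').smul_left _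

theorem Commute.imaginaryPart_left (h : Commute a b) (h' : Commute (star a) b) :
    Commute (ℑ a : A) b := by
  rw [imaginaryPart_apply_coe]
  exact ((h.sub_left h').smul_left _).smul_left _

theorem Commute.of_realPart_imaginaryPart (hre : Commute (ℜ a : A) b)
    (him : Commute (ℑ a : A) b) : Commute a b :=
  realPart_add_I_smul_imaginaryPart a ▸ hre.add_left (him.smul_left I)

end

section
variable {A : Type*} [CStarAlgebra A]

theorem spectrum_subsingleton_of_forall_commute
    (hprime : ∀ x y : A, (∀ a : A, x * a * y = 0) → x = 0 ∨ y = 0)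
    {z : A} (hz : ∀ a, Commute z a) : (spectrum ℂ z).Subsingleton := by
  have : IsStarNormal z := ⟨(hz (star z)).symm⟩
  have hz' : ∀ a, Commute (star z) a := fun a => by
    simpa using (hz (star a)).star_star
  intro μ hμ ν hν
  by_contra hne
  set r := dist μ ν / 2 with hr_def
  let bump : ℂ → ℂ → ℂ := fun c w => ((max (r - dist w c) 0 : ℝ) : ℂ)
  have hr : 0 < r := half_pos (dist_pos.2 hne)
  have hdisj : ∀ w, bump μ w * bump ν w = 0 := by
    intro w
    rcases le_or_gt r (dist w μ) with h | h
    · simp [bump, max_eq_right (sub_nonpos.2 h)]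
    · have : r ≤ dist w ν := by linarith [dist_triangle_left μ ν w, hr_def]
      simp [bump, max_eq_right (sub_nonpos.2 this)]
  have hne0 : ∀ c ∈ spectrum ℂ z, cfc (bump c) z ≠ 0 := by
    intro c hc h0
    have := norm_apply_le_norm_cfc (bump c) z hc
    simp [bump, h0] at this
    linarith
  refine (hprime (cfc (bump μ) z) (cfc (bump ν) z) fun a => ?_).elim (hne0 μ hμ) (hne0 ν hν)
  rw [((hz a).cfc (hz' a) _).eq, mul_assoc, ← cfc_mul .., cfc_congr fun w _ => hdisj w,
    cfc_const_zero, mul_zero]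

theorem exists_eq_smul_one_of_forall_commute
    (hprime : ∀ x y : A, (∀ a : A, x * a * y = 0) → x = 0 ∨ y = 0)
    {z : A} (hz : ∀ a, Commute z a) : ∃ c : ℂ, z = c • (1 : A) := by
  nontriviality A
  have : IsStarNormal z := ⟨(hz (star z)).symm⟩
  obtain ⟨c, hc⟩ := spectrum.nonempty z
  refine ⟨c, ?_⟩
  rw [← Algebra.algebraMap_eq_smul_one]
  exact CFC.eq_algebraMap_of_spectrum_subset_singleton z c fun w hw =>
    spectrum_subsingleton_of_forall_commute hprime hz hw hc

end

theorem duality_implies_trivial_relative_commutant_general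
    (A : Type*) [CStarAlgebra A]
    (hprimeA : ∀ x y : A, (∀ a : A, x * a * y = 0) → x = 0 ∨ y = 0)
    (G : Type*) [CommGroup G] [Fintype G]
    (α : G →* (A ≃ₐ[ℂ] A))
    (hαstar : ∀ (g : G) (a : A), α g (star a) = star (α g a))
    (hduality : ∀ β : A ≃ₐ[ℂ] A, (∀ a : A, β (star a) = star (β a)) →
        (∀ a : A, (∀ g : G, α g a = a) → β a = a) → ∃ g : G, β = α g)
    (z : A) (hz : ∀ a : A, (∀ g : G, α g a = a) → z * a = a * z) :
    ∃ c : ℂ, z = c • (1 : A) := by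
  have hz_star : ∀ a : A, (∀ g : G, α g a = a) → Commute (star z) a := fun a ha => by
    have hstar_fixed : ∀ g, α g (star a) = star a := fun g => by rw [hαstar, ha]
    simpa using (show Commute z (star a) from hz _ hstar_fixed).star_star
  refine exists_eq_smul_one_of_forall_commute hprimeA fun b => .of_realPart_imaginaryPart ?_ ?_
  · exact (ℜ z).2.commute_of_forall_commute_fixed α hduality
      (fun a ha => Commute.realPart_left (hz a ha) (hz_star a ha)) b
  · exact (ℑ z).2.commute_of_forall_commute_fixed α hduality
      (fun a ha => Commute.imaginaryPart_left (hz a ha) (hz_star a ha)) b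

/-- STATEMENT 10 (g) ⇒ b) of Theorem 12): Let `α` be a faithful action of a finite
abelian group `G` on a unital prime C*-algebra `A`.  If `A^α` is prime and every
*-automorphism of `A` fixing `A^α` pointwise equals some `α_g`, then
`(A^α)' ∩ A = ℂ·1`. -/
theorem duality_implies_trivial_relative_commutant
    (A : Type*) [CStarAlgebra A]
    (hprimeA : ∀ x y : A, (∀ a : A, x * a * y = 0) → x = 0 ∨ y = 0)
    (G : Type*) [CommGroup G] [Fintype G]
    (α : G →* (A ≃ₐ[ℂ] A))
    (hαstar : ∀ (g : G) (a : A), α g (star a) = star (α g a))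
    (hfaithful : ∀ g : G, (∀ a : A, α g a = a) → g = 1)
    (hprimefix : ∀ x y : A, (∀ g : G, α g x = x) → (∀ g : G, α g y = y) →
        (∀ b : A, (∀ g : G, α g b = b) → x * b * y = 0) → x = 0 ∨ y = 0)
    (hduality : ∀ β : A ≃ₐ[ℂ] A, (∀ a : A, β (star a) = star (β a)) →
        (∀ a : A, (∀ g : G, α g a = a) → β a = a) → ∃ g : G, β = α g)
    (z : A) (hz : ∀ a : A, (∀ g : G, α g a = a) → z * a = a * z) :
    ∃ c : ℂ, z = c • (1 : A) :=
  duality_implies_trivial_relative_commutant_general A hprimeA G α hαstar hduality z hz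
end

section
/- Let A be a unital prime C*-algebra, G an abelian group acting on A by *-algebra automorphisms α_g, v ∈ A a unitary, and g₀ ∈ G such that α_{g₀}(a) = v a v* for all a ∈ A. Then there exists a group homomorphism γ : G → ℂˣ with |γ(g)| = 1 such that α_g(v) = γ(g)·v for all g ∈ G. Moreover, if G is finite and Σ_{g∈G} α_g(v) ≠ 0, then γ(g) = 1 for all g, i.e., v belongs to the fixed point algebra A^α. -/
/-!
Since `G` is abelian, every `α_g` commutes with `α_{g₀} = Ad v`, so `Ad (α_g v) = Ad v`; hence
`v* α_g(v)` is a central unitary. In a prime C*-algebra the spectrum of a central (hence normal)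
element is a single point: two disjoint bumps `f`, `g` on the spectrum would give
`f(z) a g(z) = 0` for all `a`. So `α_g(v) = γ(g) v` with `|γ(g)| = 1`, and `γ` is multiplicative
because `v ≠ 0`. For finite `G`, a nontrivial character sums to zero, so
`∑ α_g(v) = (∑ γ) v ≠ 0` forces `γ = 1`.
-/

def eigencharacter {G K M : Type*} [Monoid G] [Field K] [AddCommGroup M] [Module K M]
    (ρ : G →* Module.End K M) {v : M} (hv : v ≠ 0) (μ : G → K) (hμ : ∀ g, ρ g v = μ g • v) :
    G →* K where
  toFun := μ
  map_one' := smul_left_injective K hv <| show μ 1 • v = (1 : K) • v by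
    rw [← hμ, map_one, Module.End.one_apply, one_smul]
  map_mul' g h := smul_left_injective K hv <| show μ (g * h) • v = (μ g * μ h) • v by
    rw [← hμ, map_mul, Module.End.mul_apply, hμ, map_smul, hμ, smul_smul, mul_comm]

lemma commute_star_mul_of_forall_conj_eq {R : Type*} [Monoid R] [StarMul R] {u w : R}
    (hu : u ∈ unitary R) (hw : w ∈ unitary R) (h : ∀ a, u * a * star u = w * a * star w)
    (a : R) : Commute (star u * w) a :=
  calc star u * w * a = star u * (w * a * star w) * w := by
        simp only [mul_assoc, Unitary.star_mul_self_of_mem hw, mul_one]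
    _ = star u * (u * a * star u) * w := by rw [h]
    _ = a * (star u * w) := by
        simp only [← mul_assoc, Unitary.star_mul_self_of_mem hu, one_mul]

lemma apply_mem_unitary {A B F : Type*} [Monoid A] [StarMul A] [Monoid B] [StarMul B]
    [FunLike F A B] [MonoidHomClass F A B] (f : F) (hf : ∀ a, f (star a) = star (f a))
    {u : A} (hu : u ∈ unitary A) : f u ∈ unitary B := by
  rw [Unitary.mem_iff] at hu ⊢
  simp only [← hf, ← map_mul, hu.1, hu.2, map_one, and_self]

lemma conj_apply_eq_conj {G R A : Type*} [CommGroup G] [CommSemiring R] [Semiring A]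
    [Algebra R A] [Star A] (α : G →* (A ≃ₐ[R] A)) (hαstar : ∀ g a, α g (star a) = star (α g a))
    {v : A} {g₀ : G} (hg₀ : ∀ a, α g₀ a = v * a * star v) (g : G) (a : A) :
    α g v * a * star (α g v) = v * a * star v := by
  obtain ⟨b, rfl⟩ := (α g).surjective a
  calc α g v * α g b * star (α g v) = α g (α g₀ b) := by rw [hg₀, map_mul, map_mul, hαstar]
    _ = α g₀ (α g b) := by rw [← AlgEquiv.mul_apply, ← map_mul, mul_comm, map_mul]; rfl
    _ = v * α g b * star v := hg₀ _

noncomputable def tent (c : ℂ) (r : ℝ) (z : ℂ) : ℂ := ((r - dist z c) ⊔ 0 : ℝ)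

lemma continuous_tent (c : ℂ) (r : ℝ) : Continuous (tent c r) := by
  unfold tent; fun_prop

lemma tent_mul_tent_eq_zero {c d : ℂ} {r : ℝ} (h : 2 * r ≤ dist c d) (z : ℂ) :
    tent c r z * tent d r z = 0 := by
  have := dist_triangle_left c d z
  by_cases hc : r ≤ dist z c
  · simp [tent, max_eq_right (sub_nonpos.mpr hc)]
  · simp [tent, max_eq_right (sub_nonpos.mpr (by linarith : r ≤ dist z d))]

section Prime

variable {A : Type*} [CStarAlgebra A]
  (hprime : ∀ x y : A, (∀ a : A, x * a * y = 0) → x = 0 ∨ y = 0)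
include hprime

lemma spectrum_subsingleton_of_forall_commute_s11 {w : A} (hw : ∀ a, Commute w a) :
    (spectrum ℂ w).Subsingleton := by
  have : IsStarNormal w := ⟨(hw (star w)).symm⟩
  intro c hc d hd
  by_contra hne
  set r := dist c d / 2
  have hr : 0 < r := by have := dist_pos.mpr hne; positivity
  have hzero : ∀ a, cfc (tent c r) w * a * cfc (tent d r) w = 0 := fun a => by
    rw [((hw a).cfc (hw (star a)).star_left _).eq, mul_assoc,
      ← cfc_mul _ _ w (continuous_tent c r).continuousOn (continuous_tent d r).continuousOn,
      funext (tent_mul_tent_eq_zero (mul_div_cancel₀ _ two_ne_zero).le), cfc_const_zero, mul_zero]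
  have tent_self (e : ℂ) (he : e ∈ spectrum ℂ w) (h0 : cfc (tent e r) w = 0) : False := by
    have := norm_apply_le_norm_cfc (tent e r) w he (continuous_tent e r).continuousOn
    simp only [h0, norm_zero, tent, dist_self, sub_zero, max_eq_left hr.le, Complex.norm_real,
      Real.norm_eq_abs, abs_of_pos hr] at this
    exact this.not_gt hr
  rcases hprime _ _ hzero with h0 | h0
  exacts [tent_self c hc h0, tent_self d hd h0]

lemma exists_eq_algebraMap_of_forall_commute [Nontrivial A] {w : A} (hw : ∀ a, Commute w a) :
    ∃ μ : ℂ, w = algebraMap ℂ A μ := by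
  have : IsStarNormal w := ⟨(hw (star w)).symm⟩
  obtain ⟨μ, hμ⟩ := spectrum.nonempty w
  exact ⟨μ, CFC.eq_algebraMap_of_spectrum_subset_singleton w μ
    fun z hz => spectrum_subsingleton_of_forall_commute_s11 hprime hw hz hμ⟩

lemma exists_smul_eq_of_forall_conj_eq [Nontrivial A] {u w : A} (hu : u ∈ unitary A)
    (hw : w ∈ unitary A) (h : ∀ a, u * a * star u = w * a * star w) :
    ∃ μ : ℂ, ‖μ‖ = 1 ∧ w = μ • u := by
  obtain ⟨μ, hμ⟩ := exists_eq_algebraMap_of_forall_commute hprime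
    (commute_star_mul_of_forall_conj_eq hu hw h)
  have hwu : w = μ • u :=
    calc w = u * (star u * w) := by rw [← mul_assoc, Unitary.mul_star_self_of_mem hu, one_mul]
      _ = μ • u := by rw [hμ, Algebra.algebraMap_eq_smul_one, mul_smul_one]
  refine ⟨μ, ?_, hwu⟩
  have := congrArg norm hwu
  rwa [norm_smul, CStarRing.norm_of_mem_unitary hu, CStarRing.norm_of_mem_unitary hw, mul_one,
    eq_comm] at this

end Prime

/-- If `G` is an abelian group acting on a unital prime C*-algebra `A`,
`v` is a unitary of `A` and `α_{g₀} = Ad v` for some `g₀ ∈ G`, then there is a character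
`γ : G → ℂˣ` of modulus one with `α_g(v) = γ(g)·v` for all `g`.  Moreover, if `G` is
finite and `∑_{g} α_g(v) ≠ 0`, then `γ ≡ 1`, i.e. `v ∈ A^α`. -/
theorem implementing_unitary_is_eigenvector
    (A : Type*) [CStarAlgebra A]
    (hprime : ∀ x y : A, (∀ a : A, x * a * y = 0) → x = 0 ∨ y = 0)
    (G : Type*) [CommGroup G]
    (α : G →* (A ≃ₐ[ℂ] A))
    (hαstar : ∀ (g : G) (a : A), α g (star a) = star (α g a))
    (v : A) (hv : v ∈ unitary A)
    (g₀ : G) (hg₀ : ∀ a : A, α g₀ a = v * a * star v) :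
    ∃ γ : G →* ℂˣ,
      (∀ g : G, ‖(γ g : ℂ)‖ = 1) ∧
      (∀ g : G, α g v = (γ g : ℂ) • v) ∧
      (∀ _hF : Fintype G, (∑ g : G, α g v) ≠ 0 →
        (∀ g : G, γ g = 1) ∧ ∀ g : G, α g v = v) := by
  rcases subsingleton_or_nontrivial A with hA | hA
  · exact ⟨1, fun _ => by simp, fun _ => Subsingleton.elim _ _,
      fun _ hsum => absurd (Subsingleton.elim _ _) hsum⟩
  choose μ hμ hαv using fun g => exists_smul_eq_of_forall_conj_eq hprime hv
    (apply_mem_unitary (α g) (hαstar g) hv) fun a => (conj_apply_eq_conj α hαstar hg₀ g a).symm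
  let χ := eigencharacter ((AlgEquiv.toLinearMapHom ℂ A).comp α)
    (Unitary.isUnit_coe (U := ⟨v, hv⟩)).ne_zero μ hαv
  refine ⟨χ.toHomUnits, hμ, hαv, fun _ hsum => ?_⟩
  have hχ : χ = 1 := by
    by_contra hχ
    refine hsum ?_
    rw [Finset.sum_congr rfl fun g _ => hαv g, ← Finset.sum_smul]
    exact smul_eq_zero_of_left (sum_hom_units_eq_zero χ hχ) v
  have hμ_one (g : G) : μ g = 1 := DFunLike.congr_fun hχ g
  exact ⟨fun g => Units.ext (hμ_one g), fun g => by rw [hαv g, hμ_one g, one_smul]⟩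
end

section
/- Let A be a simple unital C*-algebra, G a finite abelian group, and α a faithful action of G on A by *-algebra automorphisms such that α_g is outer for every g ≠ e. Then for every pair of nonzero elements x, y ∈ A there exists a ∈ A^α with x a y ≠ 0; that is, x A^α y ≠ {0} for all nonzero x, y ∈ A. -/
/-!
If `x A^α y = 0`, the constant function `x` is a nonzero `f : G → A` with
`∑ g, f g * α g m * y = 0` for all `m`. Such `f` form a left `A`-module that is also stable under
`f ↦ (g ↦ f g * α g s)` and under translation, so by simplicity of `A` one may take `f 1 = 1` with
`f` of minimal support. Minimality forces `f g * α g s = s * f g` for all `s`; a nonzero such `f g`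
is a multiple of a unitary implementing `α g` (as `star b * b` and `b * star b` are central, hence
positive scalars), so outerness gives `f = δ₁`, and then `y = 0`.
-/

open Function

namespace TwoSidedIdeal

variable {A : Type*} [Ring A] [TopologicalSpace A] [IsTopologicalRing A]

def topologicalClosure (I : TwoSidedIdeal A) : TwoSidedIdeal A :=
  .mk' (closure I) (subset_closure I.zero_mem)
    (fun ha hb ↦ map_mem_closure₂ continuous_add ha hb fun _ hu _ hv ↦ I.add_mem hu hv)
    (fun ha ↦ map_mem_closure continuous_neg ha fun _ hu ↦ I.neg_mem hu)
    (fun {a _} hb ↦ map_mem_closure (continuous_const_mul a) hb fun _ hu ↦ I.mul_mem_left a _ hu)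
    (fun {_ b} ha ↦
      map_mem_closure (f := (· * b)) (continuous_mul_const b) ha fun _ hu ↦ I.mul_mem_right _ b hu)

lemma coe_topologicalClosure (I : TwoSidedIdeal A) :
    (I.topologicalClosure : Set A) = closure I :=
  coe_mk' _ _ _ _ _ _

lemma le_topologicalClosure (I : TwoSidedIdeal A) : I ≤ I.topologicalClosure := by
  rw [le_iff, coe_topologicalClosure]
  exact subset_closure

end TwoSidedIdeal

namespace IsSimpleRing

lemma of_forall_isClosed {A : Type*} [NormedRing A] [CompleteSpace A] [Nontrivial A]
    (h : ∀ I : TwoSidedIdeal A, IsClosed (I : Set A) → I = ⊥ ∨ I = ⊤) : IsSimpleRing A := by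
  refine .of_eq_bot_or_eq_top fun I ↦ ?_
  have hclosed : IsClosed (I.topologicalClosure : Set A) :=
    I.coe_topologicalClosure ▸ isClosed_closure
  rcases h _ hclosed with hbot | htop
  · exact .inl (le_bot_iff.mp (hbot ▸ I.le_topologicalClosure))
  have h1 : (1 : A) ∈ closure (I : Set A) := by
    rw [← I.coe_topologicalClosure, htop]
    trivial
  -- units form an open neighbourhood of `1`, so a dense ideal contains a unit
  obtain ⟨_, ⟨u, rfl⟩, huI⟩ := mem_closure_iff.mp h1 _ Units.isOpen isUnit_one
  rw [← TwoSidedIdeal.one_mem_iff, ← u.inv_mul]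
  exact .inr (I.mul_mem_left _ _ huI)

lemma isUnit_of_mem_center {A : Type*} [Ring A] [IsSimpleRing A] {z : A}
    (hz : z ∈ Subring.center A) (h0 : z ≠ 0) : IsUnit z := by
  obtain ⟨⟨w, hw⟩, hzw⟩ :=
    (isField_center A).mul_inv_cancel (a := ⟨z, hz⟩) (by simpa using h0)
  have hzw : z * w = 1 := congrArg Subtype.val hzw
  exact ⟨⟨z, w, hzw, (Subring.mem_center_iff.mp hw z).symm.trans hzw⟩, rfl⟩

lemma exists_eq_algebraMap_of_mem_center {A : Type*} [NormedRing A] [NormedAlgebra ℂ A]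
    [CompleteSpace A] [IsSimpleRing A] {z : A} (hz : z ∈ Subring.center A) :
    ∃ μ : ℂ, z = algebraMap ℂ A μ := by
  obtain ⟨μ, hμ⟩ := spectrum.nonempty z
  refine ⟨μ, (sub_eq_zero.mp ?_).symm⟩
  by_contra h0
  refine spectrum.mem_iff.mp hμ (isUnit_of_mem_center ?_ h0)
  exact sub_mem (Set.algebraMap_mem_center (A := A) μ) hz

end IsSimpleRing

section CStarAlgebra

variable {A : Type*} [CStarAlgebra A]

lemma inv_sqrt_smul_mem_unitary {b : A} {r : ℝ} (hr : 0 < r)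
    (h₁ : star b * b = algebraMap ℝ A r) (h₂ : b * star b = algebraMap ℝ A r) :
    (√r)⁻¹ • b ∈ unitary A := by
  have hc : (√r)⁻¹ * (√r)⁻¹ * r = 1 := by
    rw [← mul_inv, Real.mul_self_sqrt hr.le, inv_mul_cancel₀ hr.ne']
  rw [Unitary.mem_iff, star_smul, star_trivial]
  constructor
  · rw [smul_mul_smul_comm, h₁, Algebra.smul_def, ← map_mul, hc, map_one]
  · rw [smul_mul_smul_comm, h₂, Algebra.smul_def, ← map_mul, hc, map_one]

variable [IsSimpleRing A]

lemma exists_pos_star_mul_self_eq_algebraMap {b : A} (hb : b ≠ 0)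
    (hc : star b * b ∈ Subring.center A) : ∃ r : ℝ, 0 < r ∧ star b * b = algebraMap ℝ A r := by
  obtain ⟨μ, hμ⟩ := IsSimpleRing.exists_eq_algebraMap_of_mem_center hc
  have hμ_real : (starRingEnd ℂ) μ = μ := by
    apply (algebraMap ℂ A).injective
    rw [← hμ, ← Complex.star_def, algebraMap_star_comm, ← hμ, star_mul, star_star]
  have hr : star b * b = algebraMap ℝ A μ.re := by
    rw [hμ, ← Complex.conj_eq_iff_re.mp hμ_real, IsScalarTower.algebraMap_apply ℝ ℂ A]
    rfl
  refine ⟨μ.re, lt_of_le_of_ne ?_ fun h0 ↦ hb ?_, hr⟩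
  · exact spectrum_star_mul_self_nonneg _ (by rw [hr, spectrum.scalar_eq]; rfl)
  · rw [← CStarRing.star_mul_self_eq_zero_iff, hr, ← h0, map_zero]

lemma exists_unitary_of_intertwines (β : A ≃ₐ[ℂ] A) (hβ : ∀ a, β (star a) = star (β a))
    {b : A} (hb0 : b ≠ 0) (hb : ∀ s, b * β s = s * b) :
    ∃ u : A, u ∈ unitary A ∧ ∀ a : A, β a = u * a * star u := by
  have hb' : ∀ s, β s * star b = star b * s := fun s ↦ by
    simpa only [star_mul, hβ, star_star] using congrArg star (hb (star s))
  have hleft : star b * b ∈ Subring.center A := Subring.mem_center_iff.mpr fun s ↦ by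
    calc s * (star b * b) = star b * β.symm s * b := by
          rw [← hb' (β.symm s), β.apply_symm_apply, mul_assoc]
      _ = star b * b * s := by rw [mul_assoc, mul_assoc, ← hb, β.apply_symm_apply]
  have hright : star (star b) * star b ∈ Subring.center A := Subring.mem_center_iff.mpr fun s ↦ by
    calc s * (star (star b) * star b) = b * β s * star b := by rw [star_star, hb, mul_assoc]
      _ = star (star b) * star b * s := by rw [star_star, mul_assoc, hb', mul_assoc]
  obtain ⟨r, hr, h₁⟩ := exists_pos_star_mul_self_eq_algebraMap hb0 hleft
  obtain ⟨r', -, h₂⟩ := exists_pos_star_mul_self_eq_algebraMap (star_ne_zero.mpr hb0) hright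
  rw [star_star] at h₂
  have hrr' : r = r' := by
    apply smul_left_injective ℝ hb0
    calc r • b = b * (star b * b) := by rw [h₁, Algebra.smul_def, Algebra.commutes]
      _ = r' • b := by rw [← mul_assoc, h₂, Algebra.smul_def]
  subst hrr'
  set v := (√r)⁻¹ • b
  have hv : v ∈ unitary A := inv_sqrt_smul_mem_unitary hr h₁ h₂
  refine ⟨star v, Unitary.star_mem hv, fun a ↦ ?_⟩
  have hva : a * v = v * β a := by rw [mul_smul_comm, smul_mul_assoc, hb]
  rw [star_star, mul_assoc, hva, ← mul_assoc, Unitary.star_mul_self_of_mem hv, one_mul]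

end CStarAlgebra

section TwistedAnnihilator

variable {R A G : Type*} [CommSemiring R] [Ring A] [Algebra R A] [Group G] [Fintype G]
  (α : G →* (A ≃ₐ[R] A)) (y : A)

def twistedAnnihilator : Submodule A (G → A) where
  carrier := {f | ∀ m, ∑ g, f g * α g m * y = 0}
  zero_mem' m := by simp
  add_mem' {f f'} hf hf' m := by
    simp only [Pi.add_apply, add_mul, Finset.sum_add_distrib, hf m, hf' m, add_zero]
  smul_mem' r f hf m := by
    rw [← mul_zero r, ← hf m, Finset.mul_sum]
    simp only [Pi.smul_apply, smul_eq_mul, mul_assoc]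

variable {α y}

lemma mem_twistedAnnihilator {f : G → A} :
    f ∈ twistedAnnihilator α y ↔ ∀ m, ∑ g, f g * α g m * y = 0 :=
  Iff.rfl

lemma mul_apply_mem_twistedAnnihilator {f : G → A} (hf : f ∈ twistedAnnihilator α y) (s : A) :
    (fun g ↦ f g * α g s) ∈ twistedAnnihilator α y := fun m ↦ by
  simpa only [map_mul, AlgEquiv.mul_apply, mul_assoc] using hf (s * m)

lemma comp_mul_right_mem_twistedAnnihilator {f : G → A} (hf : f ∈ twistedAnnihilator α y)
    (h : G) : (fun g ↦ f (g * h)) ∈ twistedAnnihilator α y := fun m ↦ by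
  rw [← hf (α h⁻¹ m)]
  refine Fintype.sum_equiv (Equiv.mulRight h) _ _ fun g ↦ ?_
  rw [Equiv.coe_mulRight, ← AlgEquiv.mul_apply, ← map_mul, mul_inv_cancel_right]

lemma const_mem_twistedAnnihilator {x : A} (hx : ∀ a, (∀ g, α g a = a) → x * a * y = 0) :
    (fun _ ↦ x) ∈ twistedAnnihilator α y := fun m ↦ by
  rw [← Finset.sum_mul, ← Finset.mul_sum]
  refine hx _ fun h ↦ ?_
  rw [map_sum]
  exact Fintype.sum_equiv (Equiv.mulLeft h) _ _ fun g ↦ by simp [← AlgEquiv.mul_apply, ← map_mul]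

lemma pi_single_one_mem_twistedAnnihilator_iff [DecidableEq G] :
    Pi.single 1 1 ∈ twistedAnnihilator α y ↔ y = 0 := by
  simp only [mem_twistedAnnihilator, Pi.single_apply, ite_mul, one_mul, zero_mul,
    Finset.sum_ite_eq', Finset.mem_univ, if_true, map_one, AlgEquiv.one_apply]
  exact ⟨fun h ↦ by simpa using h 1, fun h m ↦ by rw [h, mul_zero]⟩

variable [IsSimpleRing A]

lemma exists_mem_twistedAnnihilator_apply_one_eq_one {f : G → A}
    (hf : f ∈ twistedAnnihilator α y) (hf1 : f 1 ≠ 0) :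
    ∃ f' ∈ twistedAnnihilator α y, f' 1 = 1 ∧ support f' ⊆ support f := by
  -- the values at `1` of such `f'` form a two-sided ideal containing `f 1 ≠ 0`
  let I : TwoSidedIdeal A :=
    .mk' {t | ∃ f' ∈ twistedAnnihilator α y, f' 1 = t ∧ support f' ⊆ support f}
      ⟨0, zero_mem _, rfl, by simp⟩
      (fun ⟨f₁, h₁, h₁1, s₁⟩ ⟨f₂, h₂, h₂1, s₂⟩ ↦ ⟨f₁ + f₂, add_mem h₁ h₂, by simp [h₁1, h₂1],
        (support_add _ _).trans (Set.union_subset s₁ s₂)⟩)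
      (fun ⟨f₁, h₁, h₁1, s₁⟩ ↦ ⟨-f₁, neg_mem h₁, by simp [h₁1], by rwa [support_neg]⟩)
      (fun {r _} ⟨f₁, h₁, h₁1, s₁⟩ ↦ ⟨r • f₁, Submodule.smul_mem _ r h₁, by simp [h₁1],
        (support_const_smul_subset _ _).trans s₁⟩)
      (fun {_ s} ⟨f₁, h₁, h₁1, s₁⟩ ↦ ⟨_, mul_apply_mem_twistedAnnihilator h₁ s, by simp [h₁1],
        (support_mul_subset_left _ _).trans s₁⟩)
  have hfI : f 1 ∈ I := (TwoSidedIdeal.mem_mk' _ _ _ _ _ _ _).mpr ⟨f, hf, rfl, subset_rfl⟩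
  simpa only [I, TwoSidedIdeal.mem_mk', Set.mem_ofPred_eq]
    using IsSimpleRing.one_mem_of_ne_zero_mem I hf1 hfI

lemma exists_mem_twistedAnnihilator_apply_one_eq_one_of_ne_zero {f : G → A}
    (hf : f ∈ twistedAnnihilator α y) (hf0 : f ≠ 0) :
    ∃ f' ∈ twistedAnnihilator α y, f' 1 = 1 ∧ (support f').ncard ≤ (support f).ncard := by
  obtain ⟨h, hh⟩ := ne_iff.mp hf0
  obtain ⟨f', hf', hf'1, hsupp⟩ := exists_mem_twistedAnnihilator_apply_one_eq_one
    (comp_mul_right_mem_twistedAnnihilator hf h) (by simpa using hh)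
  refine ⟨f', hf', hf'1, (Set.ncard_le_ncard hsupp).trans_eq ?_⟩
  rw [show (fun g ↦ f (g * h)) = f ∘ (· * h) from rfl, support_comp_eq_preimage]
  exact Set.ncard_preimage_of_injective_subset_range (mul_left_injective h)
    fun g _ ↦ ⟨g * h⁻¹, inv_mul_cancel_right g h⟩

lemma exists_mem_twistedAnnihilator_intertwining {f : G → A}
    (hf : f ∈ twistedAnnihilator α y) (hf0 : f ≠ 0) :
    ∃ f ∈ twistedAnnihilator α y, f 1 = 1 ∧ ∀ g s, f g * α g s = s * f g := by
  let N : Set (G → A) := {f | f ∈ twistedAnnihilator α y ∧ f 1 = 1}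
  obtain ⟨f₀, hf₀, hf₀1, -⟩ := exists_mem_twistedAnnihilator_apply_one_eq_one_of_ne_zero hf hf0
  let f₁ := argminOn (fun f ↦ (support f).ncard) N ⟨f₀, hf₀, hf₀1⟩
  obtain ⟨hf₁, hf₁1⟩ : f₁ ∈ N := argminOn_mem ..
  refine ⟨f₁, hf₁, hf₁1, fun g s ↦ ?_⟩
  set c : G → A := fun g ↦ f₁ g * α g s - s * f₁ g
  have hc : c ∈ twistedAnnihilator α y :=
    sub_mem (mul_apply_mem_twistedAnnihilator hf₁ s) (Submodule.smul_mem _ s hf₁)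
  -- `c 1 = 0`, so a nonzero `c` would normalize to an element of smaller support than `f₁`
  suffices c = 0 from sub_eq_zero.mp (congrFun this g)
  by_contra hc0
  obtain ⟨f', hf', hf'1, hcard⟩ := exists_mem_twistedAnnihilator_apply_one_eq_one_of_ne_zero hc hc0
  have hsub : support c ⊆ support f₁ := fun g hg hf₁g ↦ hg (by simp [c, hf₁g])
  have hssub : support c ⊂ support f₁ :=
    (Set.ssubset_iff_of_subset hsub).mpr ⟨1, by simp [hf₁1], by simp [c, hf₁1]⟩
  exact (hcard.trans_lt (Set.ncard_lt_ncard hssub)).not_ge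
    (argminOn_le (fun f ↦ (support f).ncard) N (show f' ∈ N from ⟨hf', hf'1⟩))

end TwistedAnnihilator

theorem fixed_point_algebra_separates_general
    (A : Type*) [CStarAlgebra A]
    (hsimple : ∀ I : TwoSidedIdeal A, IsClosed (I : Set A) → I = ⊥ ∨ I = ⊤)
    (G : Type*) [CommGroup G] [Fintype G]
    (α : G →* (A ≃ₐ[ℂ] A))
    (hαstar : ∀ (g : G) (a : A), α g (star a) = star (α g a))
    (houter : ∀ g : G, g ≠ 1 →
      ¬ ∃ u : A, u ∈ unitary A ∧ ∀ a : A, α g a = u * a * star u)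
    (x y : A) (hx : x ≠ 0) (hy : y ≠ 0) :
    ∃ a : A, (∀ g : G, α g a = a) ∧ x * a * y ≠ 0 := by
  classical
  by_contra! hxy
  have : Nontrivial A := nontrivial_of_ne x 0 hx
  have : IsSimpleRing A := .of_forall_isClosed hsimple
  obtain ⟨f, hf, hf1, hfα⟩ := exists_mem_twistedAnnihilator_intertwining
    (const_mem_twistedAnnihilator hxy) (ne_iff.mpr ⟨1, hx⟩)
  have hδ : f = Pi.single 1 1 := by
    funext g
    obtain rfl | hg := eq_or_ne g 1
    · rw [hf1, Pi.single_eq_same]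
    · rw [Pi.single_eq_of_ne hg]
      by_contra hfg
      exact houter g hg (exists_unitary_of_intertwines (α g) (hαstar g) hfg (hfα g))
  exact hy (pi_single_one_mem_twistedAnnihilator_iff.mp (hδ ▸ hf))

/-- STATEMENT 16 (a) ⇒ e) in the simple unital case): Let `α` be a faithful action of a
finite abelian group `G` on a simple unital C*-algebra `A` such that `α_g` is outer for
every `g ≠ e`.  Then `x A^α y ≠ {0}` for all nonzero `x, y ∈ A`. -/
theorem fixed_point_algebra_separates
    (A : Type*) [CStarAlgebra A]
    (hsimple : ∀ I : TwoSidedIdeal A, IsClosed (I : Set A) → I = ⊥ ∨ I = ⊤)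
    (G : Type*) [CommGroup G] [Fintype G]
    (α : G →* (A ≃ₐ[ℂ] A))
    (hαstar : ∀ (g : G) (a : A), α g (star a) = star (α g a))
    (hfaithful : ∀ g : G, (∀ a : A, α g a = a) → g = 1)
    (houter : ∀ g : G, g ≠ 1 →
      ¬ ∃ u : A, u ∈ unitary A ∧ ∀ a : A, α g a = u * a * star u)
    (x y : A) (hx : x ≠ 0) (hy : y ≠ 0) :
    ∃ a : A, (∀ g : G, α g a = a) ∧ x * a * y ≠ 0 :=
  fixed_point_algebra_separates_general A hsimple G α hαstar houter x y hx hy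
end
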